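/- Let p be a prime and k ≥ 0. Every nonzero vector v in the row space of the matrix B_k satisfies ‖v‖ = p^k. -/

import Mathlib

/-- The row space of a matrix over `ZMod p`: all linear combinations of its rows. -/
def rowSpace {p m n : ℕ} (M : Matrix (Fin m) (Fin n) (ZMod p)) :
    Submodule (ZMod p) (Fin n → ZMod p) :=
  Submodule.span (ZMod p) {v | ∃ i, v = M i}

/-- The capacity of a matrix: the maximal Hamming weight of a vector in its row space. -/
noncomputable def capacity {p m n : ℕ} (M : Matrix (Fin m) (Fin n) (ZMod p)) : ℕ :=
  sSup (hammingNorm '' (rowSpace M : Set (Fin n → ZMod p)))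

/-- `lambdaP p n` is the minimum capacity over all matrices over `𝔽_p`
with `n` columns, none of which is a zero column.  (For `n = 0` this gives `0`.) -/
noncomputable def lambdaP (p n : ℕ) : ℕ :=
  sInf {c | ∃ (m : ℕ) (M : Matrix (Fin m) (Fin n) (ZMod p)),
    (∀ j, ∃ i, M i j ≠ 0) ∧ c = capacity M}

/-- `sigmaP p k = 1 + p + ⋯ + p^k`. -/
def sigmaP (p k : ℕ) : ℕ := ∑ j ∈ Finset.range (k + 1), p ^ j

lemma sigmaP_pos (p k : ℕ) : 0 < sigmaP p k :=
  Finset.sum_pos' (fun _ _ => Nat.zero_le _)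
    ⟨0, Finset.mem_range.mpr (Nat.succ_pos k), by simp⟩

/-- The matrix `B_k`: `B_0 = [1]`; for `k ≥ 1`, the first `k` rows of `B_k` consist of
`p` copies of `B_{k-1}` side by side followed by a zero column, and the last row has,
for each `a = 0,…,p-1`, a block of `σ_{k-1}` entries equal to `a`, followed by a final `1`. -/
def matB (p : ℕ) : (k : ℕ) → Matrix (Fin (k + 1)) (Fin (sigmaP p k)) (ZMod p)
  | 0 => fun _ _ => 1
  | (k + 1) => fun r c =>
      if (c : ℕ) = sigmaP p (k + 1) - 1 then
        if (r : ℕ) = k + 1 then 1 else 0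
      else
        if hr : (r : ℕ) < k + 1 then
          matB p k ⟨r, hr⟩ ⟨(c : ℕ) % sigmaP p k, Nat.mod_lt _ (sigmaP_pos p k)⟩
        else (((c : ℕ) / sigmaP p k : ℕ) : ZMod p)


/-!
Induction on `k`. A vector of `row(B_{k+1})` is determined by a vector `u ∈ row(B_k)` and the
coefficient `t` of the last row: on the `a`-th copy of `B_k` it reads `u + t a`, and its last
entry is `t`. If `t = 0` it consists of `p` copies of `u`, of weight `p · p^k`. If `t ≠ 0`,
then for each column `i` of `B_k` the map `a ↦ u i + t a` is a bijection of `𝔽_p`, so exactly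
`p - 1` of the `p` entries are nonzero, and the weight is `(p - 1) σ_k + 1 = p^(k+1)`.
-/

open Matrix

lemma sigmaP_succ (p k : ℕ) : sigmaP p (k + 1) = p * sigmaP p k + 1 := by
  rw [sigmaP, Finset.sum_range_succ']
  simp [sigmaP, pow_succ, Finset.mul_sum, mul_comm]

lemma sub_one_mul_sigmaP_add_one {p : ℕ} (hp : 1 ≤ p) (k : ℕ) :
    (p - 1) * sigmaP p k + 1 = p ^ (k + 1) := by
  induction k with
  | zero => simp [sigmaP]; omega
  | succ k ih =>
    rw [sigmaP_succ, pow_succ]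
    nlinarith [Nat.sub_add_cancel hp]

lemma mem_rowSpace_iff {p m n : ℕ} {M : Matrix (Fin m) (Fin n) (ZMod p)}
    {v : Fin n → ZMod p} : v ∈ rowSpace M ↔ ∃ c, c ᵥ* M = v := by
  have hrows : {w | ∃ i, w = M i} = Set.range M.row :=
    Set.ext fun _ => exists_congr fun _ => eq_comm
  rw [rowSpace, hrows, ← range_vecMulLinear, LinearMap.mem_range]
  rfl

section Hamming

variable {ι κ β : Type*} [Fintype ι] [Fintype κ] [Zero β] [DecidableEq β]

lemma hammingNorm_comp_equiv (x : κ → β) (e : ι ≃ κ) :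
    hammingNorm (x ∘ e) = hammingNorm x := by
  simp only [hammingNorm, Finset.card_filter]
  exact e.sum_comp (fun j => if x j ≠ 0 then 1 else 0)

lemma hammingNorm_sumElim (x : ι → β) (y : κ → β) :
    hammingNorm (Sum.elim x y) = hammingNorm x + hammingNorm y := by
  simp only [hammingNorm, Finset.card_filter, Fintype.sum_sum_type, Sum.elim_inl, Sum.elim_inr]
  rfl

lemma hammingNorm_eq_sum_hammingNorm (x : ι × κ → β) :
    hammingNorm x = ∑ j, hammingNorm (fun i => x (i, j)) := by
  simp only [hammingNorm, Finset.card_filter]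
  rw [Fintype.sum_prod_type, Finset.sum_comm]

lemma hammingNorm_comp_snd (y : κ → β) :
    hammingNorm (fun x : ι × κ => y x.2) = Fintype.card ι * hammingNorm y := by
  have hsupp : Finset.univ.filter (fun x : ι × κ => y x.2 ≠ 0)
      = (Finset.univ : Finset ι) ×ˢ Finset.univ.filter (fun j => y j ≠ 0) := by
    ext; simp
  rw [hammingNorm, hsupp, Finset.card_product, Finset.card_univ, hammingNorm]

end Hamming

lemma hammingNorm_add_mul {F : Type*} [DivisionRing F] [Fintype F] [DecidableEq F] (x : F)
    {t : F} (ht : t ≠ 0) : hammingNorm (fun b => x + t * b) = Fintype.card F - 1 := by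
  have hcomp : (fun b => x + t * b) = id ∘ (Equiv.mulLeft₀ t ht).trans (Equiv.addLeft x) :=
    rfl
  rw [hcomp, hammingNorm_comp_equiv]
  simp [hammingNorm, Finset.filter_ne', Finset.card_univ]

lemma natCast_fin_bijective (p : ℕ) [NeZero p] :
    Function.Bijective (fun a : Fin p => ((a : ℕ) : ZMod p)) := by
  refine (Fintype.bijective_iff_injective_and_card _).mpr ⟨fun a b hab => ?_, by simp⟩
  simpa [ZMod.val_cast_of_lt a.2, ZMod.val_cast_of_lt b.2, Fin.ext_iff] using
    congrArg ZMod.val hab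

section blockExtend

variable {p : ℕ} {ι : Type*} [Fintype ι]

def blockExtend (u : ι → ZMod p) (t : ZMod p) : Fin p × ι ⊕ Fin 1 → ZMod p :=
  Sum.elim (fun x => u x.2 + t * ((x.1 : ℕ) : ZMod p)) (fun _ => t)

lemma hammingNorm_blockExtend_zero (u : ι → ZMod p) :
    hammingNorm (blockExtend u 0) = p * hammingNorm u := by
  have hzero : hammingNorm (fun _ : Fin 1 => (0 : ZMod p)) = 0 := hammingNorm_zero
  simp only [blockExtend, hammingNorm_sumElim, zero_mul, add_zero, hammingNorm_comp_snd,
    Fintype.card_fin, hzero]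

lemma hammingNorm_add_mul_natCast [Fact p.Prime] (x : ZMod p) {t : ZMod p} (ht : t ≠ 0) :
    hammingNorm (fun a : Fin p => x + t * ((a : ℕ) : ZMod p)) = p - 1 := by
  have hcomp : (fun a : Fin p => x + t * ((a : ℕ) : ZMod p))
      = (fun b => x + t * b) ∘ Equiv.ofBijective _ (natCast_fin_bijective p) := rfl
  rw [hcomp, hammingNorm_comp_equiv, hammingNorm_add_mul x ht, ZMod.card]

lemma hammingNorm_blockExtend_of_ne_zero [Fact p.Prime] (u : ι → ZMod p) {t : ZMod p}
    (ht : t ≠ 0) : hammingNorm (blockExtend u t) = (p - 1) * Fintype.card ι + 1 := by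
  have hlast : hammingNorm (fun _ : Fin 1 => t) = 1 := by simp [hammingNorm, ht]
  simp only [blockExtend, hammingNorm_sumElim, hammingNorm_eq_sum_hammingNorm,
    hammingNorm_add_mul_natCast _ ht, hlast, Finset.sum_const, Finset.card_univ, smul_eq_mul,
    mul_comm]

end blockExtend

section matB

variable (p k : ℕ)

/-- `inl (a, i)` is column `i` of the `a`-th copy of `B_k` inside `B_{k+1}`, `inr 0` its last
column. -/
def colEquiv : Fin p × Fin (sigmaP p k) ⊕ Fin 1 ≃ Fin (sigmaP p (k + 1)) :=
  (Equiv.sumCongr finProdFinEquiv (Equiv.refl _)).trans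
    (finSumFinEquiv.trans (finCongr (sigmaP_succ p k).symm))

variable {p k}

lemma colEquiv_inl_val (a : Fin p) (i : Fin (sigmaP p k)) :
    (colEquiv p k (.inl (a, i)) : ℕ) = i + sigmaP p k * a := by
  simp [colEquiv]

lemma colEquiv_inr_val (j : Fin 1) : (colEquiv p k (.inr j) : ℕ) = sigmaP p (k + 1) - 1 := by
  simp [colEquiv, sigmaP_succ, Fin.fin_one_eq_zero j]

lemma colEquiv_inl_val_ne (x : Fin p × Fin (sigmaP p k)) :
    (colEquiv p k (.inl x) : ℕ) ≠ sigmaP p (k + 1) - 1 := by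
  rw [← colEquiv_inr_val 0]
  exact Fin.val_ne_of_ne ((colEquiv p k).injective.ne Sum.inl_ne_inr)

lemma matB_succ_castSucc_inl (r : Fin (k + 1)) (a : Fin p) (i : Fin (sigmaP p k)) :
    matB p (k + 1) r.castSucc (colEquiv p k (.inl (a, i))) = matB p k r i := by
  simp only [matB, if_neg (colEquiv_inl_val_ne _)]
  simp only [Fin.val_castSucc, r.is_lt, dif_pos, colEquiv_inl_val]
  congr 1; ext; simp [Nat.add_mul_mod_self_left, Nat.mod_eq_of_lt i.is_lt]

lemma matB_succ_last_inl (a : Fin p) (i : Fin (sigmaP p k)) :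
    matB p (k + 1) (Fin.last _) (colEquiv p k (.inl (a, i))) = ((a : ℕ) : ZMod p) := by
  simp only [matB, if_neg (colEquiv_inl_val_ne _)]
  simp [colEquiv_inl_val, Nat.add_mul_div_left _ _ (sigmaP_pos p k),
    Nat.div_eq_of_lt i.is_lt]

lemma matB_succ_castSucc_inr (r : Fin (k + 1)) (j : Fin 1) :
    matB p (k + 1) r.castSucc (colEquiv p k (.inr j)) = 0 := by
  simp [matB, colEquiv_inr_val, r.is_lt.ne]

lemma matB_succ_last_inr (j : Fin 1) :
    matB p (k + 1) (Fin.last _) (colEquiv p k (.inr j)) = 1 := by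
  simp [matB, colEquiv_inr_val]

lemma vecMul_matB_succ_comp_colEquiv (c : Fin (k + 2) → ZMod p) :
    (c ᵥ* matB p (k + 1)) ∘ colEquiv p k =
      blockExtend (Fin.init c ᵥ* matB p k) (c (Fin.last _)) := by
  funext x
  rcases x with ⟨a, i⟩ | j <;>
    simp [blockExtend, vecMul, dotProduct, Fin.sum_univ_castSucc, Fin.init,
      matB_succ_castSucc_inl, matB_succ_last_inl, matB_succ_castSucc_inr, matB_succ_last_inr]

end matB

theorem statement4 (p : ℕ) (hp : p.Prime) (k : ℕ)
    (v : Fin (sigmaP p k) → ZMod p) (hv : v ∈ rowSpace (matB p k)) (hv0 : v ≠ 0) :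
    hammingNorm v = p ^ k := by
  have : Fact p.Prime := ⟨hp⟩
  induction k with
  | zero =>
    have hle : hammingNorm v ≤ 1 := hammingNorm_le_card_fintype.trans (by simp [sigmaP])
    simpa using le_antisymm hle (hammingNorm_pos_iff.mpr hv0)
  | succ k ih =>
    obtain ⟨c, rfl⟩ := mem_rowSpace_iff.mp hv
    have hu : Fin.init c ᵥ* matB p k ∈ rowSpace (matB p k) := mem_rowSpace_iff.mpr ⟨_, rfl⟩
    have hpos := hammingNorm_pos_iff.mpr hv0
    rw [← hammingNorm_comp_equiv _ (colEquiv p k), vecMul_matB_succ_comp_colEquiv] at hpos ⊢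
    by_cases ht : c (Fin.last _) = 0
    · rw [ht, hammingNorm_blockExtend_zero] at hpos ⊢
      have hu0 : Fin.init c ᵥ* matB p k ≠ 0 := by
        rintro hu0
        simp [hu0] at hpos
      rw [ih _ hu hu0, pow_succ, mul_comm]
    · rw [hammingNorm_blockExtend_of_ne_zero _ ht, Fintype.card_fin,
        sub_one_mul_sigmaP_add_one hp.one_lt.le]
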